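/- arXiv:2209.14621 — 10 statements merged into one kernel-verified Lean document; each statement's English description precedes it below -/
import Mathlib

section
/- For all complex numbers z₁, z₂ (with the convention 0·ln 0 = 0), |Im((z₂ ln|z₂|² − z₁ ln|z₁|²)(conj(z₂) − conj(z₁)))| ≤ 2|z₂ − z₁|². -/
/-!
The imaginary part of the product only sees the cross term: it equals
`(ln|z₁|² - ln|z₂|²) · Im(z₂ conj z₁)`, and `|Im(z₂ conj z₁)| ≤ |z₂ - z₁| · min(|z₁|, |z₂|)`
because `Im(z conj z) = 0`. Since `ln x ≤ x - 1`, the logarithmic difference is at most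
`2 |r₂ - r₁| / min(r₁, r₂)` for `rᵢ = |zᵢ|`, so the minimum cancels and
`|r₂ - r₁| ≤ |z₂ - z₁|` finishes the estimate.
-/

open Complex ComplexConjugate

namespace Real

theorem mul_log_div_le_sub {a b : ℝ} (ha : 0 < a) (hb : 0 < b) : a * log (b / a) ≤ b - a := by
  have h := mul_le_mul_of_nonneg_left (log_le_sub_one_of_pos (div_pos hb ha)) ha.le
  rwa [mul_sub, mul_div_cancel₀ _ ha.ne', mul_one] at h

theorem min_mul_abs_log_sub_log_le {a b : ℝ} (ha : 0 ≤ a) (hb : 0 ≤ b) :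
    min a b * |log b - log a| ≤ |b - a| := by
  wlog hab : a ≤ b generalizing a b
  · rw [min_comm, abs_sub_comm, abs_sub_comm b]
    exact this hb ha (le_of_not_ge hab)
  rcases ha.eq_or_lt with rfl | ha
  · simp [hab]
  rw [min_eq_left hab, abs_of_nonneg (sub_nonneg.2 (log_le_log ha hab)),
    abs_of_nonneg (sub_nonneg.2 hab), ← log_div (ha.trans_le hab).ne' ha.ne']
  exact mul_log_div_le_sub ha (ha.trans_le hab)

end Real

namespace Complex

theorem im_mul_ofReal_sub_mul_ofReal_mul_conj_sub (z₁ z₂ : ℂ) (s t : ℝ) :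
    ((z₂ * s - z₁ * t) * (conj z₂ - conj z₁)).im = (t - s) * (z₂ * conj z₁).im := by
  simp only [mul_im, mul_re, sub_im, sub_re, conj_re, conj_im, ofReal_re, ofReal_im]
  ring

theorem abs_im_mul_conj_le (z w : ℂ) : |(z * conj w).im| ≤ ‖z - w‖ * ‖w‖ := by
  have h : (z * conj w).im = ((z - w) * conj w).im := by
    simp only [mul_im, sub_re, sub_im, conj_re, conj_im]
    ring
  rw [h, ← norm_conj w, ← norm_mul]
  exact abs_im_le_norm _

theorem abs_im_mul_conj_comm (z w : ℂ) : |(z * conj w).im| = |(w * conj z).im| := by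
  rw [← abs_neg]
  congr 1
  simp only [mul_im, conj_re, conj_im]
  ring

theorem abs_im_mul_conj_le_min (z w : ℂ) : |(z * conj w).im| ≤ ‖z - w‖ * min ‖z‖ ‖w‖ := by
  rw [mul_min_of_nonneg _ _ (norm_nonneg _)]
  refine le_min ?_ (abs_im_mul_conj_le z w)
  rw [abs_im_mul_conj_comm, norm_sub_rev]
  exact abs_im_mul_conj_le w z

end Complex

theorem log_inequality (z₁ z₂ : ℂ) :
    |(((z₂ * (Real.log (‖z₂‖ ^ 2) : ℂ)) -
        (z₁ * (Real.log (‖z₁‖ ^ 2) : ℂ))) *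
        ((starRingEnd ℂ) z₂ - (starRingEnd ℂ) z₁)).im| ≤
      2 * ‖z₂ - z₁‖ ^ 2 := by
  rw [im_mul_ofReal_sub_mul_ofReal_mul_conj_sub, abs_mul, Real.log_pow, Real.log_pow,
    ← mul_sub, abs_mul, Nat.cast_ofNat, abs_two, abs_sub_comm]
  calc 2 * |Real.log ‖z₂‖ - Real.log ‖z₁‖| * |(z₂ * conj z₁).im|
      ≤ 2 * |Real.log ‖z₂‖ - Real.log ‖z₁‖| * (‖z₂ - z₁‖ * min ‖z₁‖ ‖z₂‖) := by
        rw [min_comm]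
        gcongr
        exact abs_im_mul_conj_le_min z₂ z₁
    _ = 2 * (min ‖z₁‖ ‖z₂‖ * |Real.log ‖z₂‖ - Real.log ‖z₁‖|) * ‖z₂ - z₁‖ := by ring
    _ ≤ 2 * |‖z₂‖ - ‖z₁‖| * ‖z₂ - z₁‖ := by
        gcongr
        exact Real.min_mul_abs_log_sub_log_le (norm_nonneg _) (norm_nonneg _)
    _ ≤ 2 * ‖z₂ - z₁‖ ^ 2 := by
        rw [sq, ← mul_assoc]
        gcongr
        exact abs_norm_sub_norm_le z₂ z₁
end

section
/- For every ε ∈ (0,1) there exists a constant C > 0 such that for all complex numbers x, y (with the convention 0·ln 0 = 0), |x ln|x|² − y ln|y|²| ≤ C(|x|^ε |ln|x|| + |y|^ε |ln|y||) |x − y|^{1−ε} + 2|x − y|. -/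
/-!
Assume `‖y‖ ≤ ‖x‖` and split
`log ‖x‖² • x - log ‖y‖² • y = log ‖x‖² • (x - y) + (log ‖x‖² - log ‖y‖²) • y`.
By `log t ≤ t - 1` at `t = ‖x‖ / ‖y‖`, the second term has norm at most
`2 (‖x‖ - ‖y‖) ≤ 2 ‖x - y‖`. In the first, `‖x - y‖ ≤ 2 ‖x‖` gives
`‖x - y‖ = ‖x - y‖ ^ ε ‖x - y‖ ^ (1 - ε) ≤ 2 ‖x‖ ^ ε ‖x - y‖ ^ (1 - ε)`.
-/

open Real

lemma Real.mul_abs_log_sub_log_le_sub {a b : ℝ} (hb : 0 ≤ b) (hba : b ≤ a) :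
    b * |log a - log b| ≤ a - b := by
  rcases hb.eq_or_lt with rfl | hb
  · simpa using hb.trans hba
  have ha : 0 < a := hb.trans_le hba
  calc b * |log a - log b| = b * log (a / b) := by
        rw [abs_of_nonneg (sub_nonneg.2 (log_le_log hb hba)), log_div ha.ne' hb.ne']
    _ ≤ b * (a / b - 1) := by gcongr; exact log_le_sub_one_of_pos (div_pos ha hb)
    _ = a - b := by field_simp

lemma Real.le_two_mul_rpow_mul_rpow_one_sub {a d ε : ℝ} (hd : 0 ≤ d) (hda : d ≤ 2 * a)
    (hε₀ : 0 ≤ ε) (hε₁ : ε ≤ 1) :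
    d ≤ 2 * a ^ ε * d ^ (1 - ε) := by
  have ha : 0 ≤ a := by linarith
  calc d = d ^ ε * d ^ (1 - ε) := by
        rw [← rpow_add' hd (by norm_num), add_sub_cancel, rpow_one]
    _ ≤ (2 * a) ^ ε * d ^ (1 - ε) := by gcongr
    _ = 2 ^ ε * a ^ ε * d ^ (1 - ε) := by rw [mul_rpow zero_le_two ha]
    _ ≤ 2 * a ^ ε * d ^ (1 - ε) := by
        gcongr
        exact rpow_le_self_of_one_le one_le_two hε₁

section NormedSpace

variable {E : Type*} [SeminormedAddCommGroup E] [NormedSpace ℝ E]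

lemma norm_log_sq_smul_sub_le_of_norm_le {ε : ℝ} (hε₀ : 0 ≤ ε) (hε₁ : ε ≤ 1) {x y : E}
    (hyx : ‖y‖ ≤ ‖x‖) :
    ‖log (‖x‖ ^ 2) • x - log (‖y‖ ^ 2) • y‖ ≤
      4 * ‖x‖ ^ ε * |log ‖x‖| * ‖x - y‖ ^ (1 - ε) + 2 * ‖x - y‖ := by
  have hdecomp : log (‖x‖ ^ 2) • x - log (‖y‖ ^ 2) • y =
      (2 * log ‖x‖) • (x - y) + (2 * (log ‖x‖ - log ‖y‖)) • y := by
    simp only [log_pow, Nat.cast_ofNat, smul_sub, mul_sub, sub_smul]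
    abel
  have hdist : ‖x - y‖ ≤ 2 * ‖x‖ := by linarith [norm_sub_le x y]
  have hsecond : ‖y‖ * |log ‖x‖ - log ‖y‖| ≤ ‖x - y‖ :=
    (mul_abs_log_sub_log_le_sub (norm_nonneg y) hyx).trans (norm_sub_norm_le x y)
  have hfirst := le_two_mul_rpow_mul_rpow_one_sub (norm_nonneg (x - y)) hdist hε₀ hε₁
  rw [hdecomp]
  refine (norm_add_le _ _).trans ?_
  rw [norm_smul, norm_smul, Real.norm_eq_abs, Real.norm_eq_abs, abs_mul, abs_two,
    abs_mul, abs_two]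
  calc 2 * |log ‖x‖| * ‖x - y‖ + 2 * |log ‖x‖ - log ‖y‖| * ‖y‖
      ≤ 2 * |log ‖x‖| * (2 * ‖x‖ ^ ε * ‖x - y‖ ^ (1 - ε)) + 2 * ‖x - y‖ := by
        have := mul_le_mul_of_nonneg_left hfirst (abs_nonneg (log ‖x‖))
        linarith
    _ = 4 * ‖x‖ ^ ε * |log ‖x‖| * ‖x - y‖ ^ (1 - ε) + 2 * ‖x - y‖ := by ring

lemma norm_log_sq_smul_sub_le {ε : ℝ} (hε₀ : 0 ≤ ε) (hε₁ : ε ≤ 1) (x y : E) :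
    ‖log (‖x‖ ^ 2) • x - log (‖y‖ ^ 2) • y‖ ≤
      4 * (‖x‖ ^ ε * |log ‖x‖| + ‖y‖ ^ ε * |log ‖y‖|) * ‖x - y‖ ^ (1 - ε) + 2 * ‖x - y‖ := by
  rcases le_total ‖y‖ ‖x‖ with hyx | hxy
  · have hy : 0 ≤ ‖y‖ ^ ε * |log ‖y‖| * ‖x - y‖ ^ (1 - ε) := by positivity
    linarith [norm_log_sq_smul_sub_le_of_norm_le hε₀ hε₁ hyx]
  · rw [norm_sub_rev x y, norm_sub_rev (log _ • x)]
    have hx : 0 ≤ ‖x‖ ^ ε * |log ‖x‖| * ‖y - x‖ ^ (1 - ε) := by positivity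
    linarith [norm_log_sq_smul_sub_le_of_norm_le hε₀ hε₁ hxy]

end NormedSpace

theorem lip_log_estimate (ε : ℝ) (hε : ε ∈ Set.Ioo (0:ℝ) 1) :
    ∃ C > 0, ∀ x y : ℂ,
      ‖x * (Real.log (‖x‖ ^ 2) : ℂ) -
          y * (Real.log (‖y‖ ^ 2) : ℂ)‖ ≤
        C * (‖x‖ ^ ε * |Real.log (‖x‖)| +
             ‖y‖ ^ ε * |Real.log (‖y‖)|) *
            ‖x - y‖ ^ (1 - ε) +
          2 * ‖x - y‖ := by
  refine ⟨4, four_pos, fun x y => ?_⟩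
  simpa only [mul_comm _ ((Real.log _ : ℝ) : ℂ), ← Complex.real_smul] using
    norm_log_sq_smul_sub_le hε.1.le hε.2.le x y
end

section
/- For all real y ≥ 0, the identity y² ln(y²) − y² + 1 = 4(y−1)² ∫₀¹ (1 + ln(1−s+sy))(1−s) ds holds, where the left side is interpreted as 1 at y = 0. -/
/-!
Put `u = 1 - s + s y`, so that `u' = y - 1` and `y - u = (y - 1)(1 - s)`. Then
`G(s) = 4(y-1)²(s - s²/2) + 4y(u log u - u) - 2u² log u + u²` has derivative
`4(y-1)² (1 + log u)(1 - s)` wherever `u > 0`, in particular on `(0, 1)`. Since `u log u` is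
continuous even at `u = 0`, `G` is continuous on `[0, 1]`, and the fundamental theorem of calculus
gives the right-hand side as `G(1) - G(0) = 2y² log y - y² + 1`. Keeping the factor `4(y-1)²` in
`G`, rather than dividing by it, avoids a case distinction at `y = 1`.
-/

open Real

noncomputable def taylorPrimitive (y s : ℝ) : ℝ :=
  4 * (y - 1) ^ 2 * (s - s ^ 2 / 2)
    + 4 * y * ((1 - s + s * y) * log (1 - s + s * y) - (1 - s + s * y))
    - 2 * (1 - s + s * y) * ((1 - s + s * y) * log (1 - s + s * y)) + (1 - s + s * y) ^ 2

theorem continuous_taylorPrimitive (y : ℝ) : Continuous (taylorPrimitive y) := by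
  have hml : Continuous fun s : ℝ => (1 - s + s * y) * log (1 - s + s * y) :=
    continuous_mul_log.comp (by fun_prop)
  unfold taylorPrimitive
  fun_prop

theorem hasDerivAt_taylorPrimitive {y s : ℝ} (hu : 0 < 1 - s + s * y) :
    HasDerivAt (taylorPrimitive y)
      (4 * (y - 1) ^ 2 * ((1 + log (1 - s + s * y)) * (1 - s))) s := by
  have hlin : HasDerivAt (fun s : ℝ => 1 - s + s * y) (y - 1) s :=
    (((hasDerivAt_id' s).const_sub 1).add ((hasDerivAt_id' s).mul_const y)).congr_deriv (by ring)
  have hml := (hasDerivAt_mul_log hu.ne').comp s hlin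
  have hG : HasDerivAt (taylorPrimitive y) _ s :=
    ((((hasDerivAt_id' s).sub ((hasDerivAt_pow 2 s).div_const 2)).const_mul
      (4 * (y - 1) ^ 2)).add ((hml.sub hlin).const_mul (4 * y))).sub
      ((hlin.const_mul 2).mul hml) |>.add (hlin.pow 2)
  refine hG.congr_deriv ?_
  simp only [Function.comp_apply]
  push_cast
  ring

theorem intervalIntegrable_taylorIntegrand {y : ℝ} (hy : 0 ≤ y) :
    IntervalIntegrable (fun s => (1 + log (1 - s + s * y)) * (1 - s)) MeasureTheory.volume 0 1 := by
  rcases hy.eq_or_lt with rfl | hy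
  -- at `y = 0` the logarithm blows up at `s = 1`, but the factor `1 - s` tames it
  · have hmul_log : (fun s : ℝ => (1 + log (1 - s + s * 0)) * (1 - s)) =
        fun s => (1 - s) + (1 - s) * log (1 - s) := by
      funext s
      simp only [mul_zero, add_zero]
      ring
    rw [hmul_log]
    exact ((continuous_const.sub continuous_id).add
      (continuous_mul_log.comp (by fun_prop))).intervalIntegrable 0 1
  · refine ContinuousOn.intervalIntegrable fun s hs => ContinuousAt.continuousWithinAt ?_
    rw [Set.uIcc_of_le zero_le_one] at hs
    have hu : 1 - s + s * y ≠ 0 := by nlinarith [hs.1, hs.2, mul_nonneg hs.1 hy.le]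
    exact (continuousAt_const.add ((by fun_prop : Continuous fun s : ℝ => 1 - s + s * y)
      |>.continuousAt.log hu)).mul (by fun_prop)

theorem taylor_identity (y : ℝ) (hy : 0 ≤ y) :
    y ^ 2 * Real.log (y ^ 2) - y ^ 2 + 1 =
      4 * (y - 1) ^ 2 * ∫ s in (0:ℝ)..1, (1 + Real.log (1 - s + s * y)) * (1 - s) := by
  have hpos : ∀ s ∈ Set.Ioo (0 : ℝ) 1, 0 < 1 - s + s * y := fun s hs => by
    nlinarith [hs.2, mul_nonneg hs.1.le hy]
  rw [← intervalIntegral.integral_const_mul,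
    intervalIntegral.integral_eq_sub_of_hasDerivAt_of_le zero_le_one
      (continuous_taylorPrimitive y).continuousOn
      (fun s hs => hasDerivAt_taylorPrimitive (hpos s hs))
      ((intervalIntegrable_taylorIntegrand hy).const_mul _)]
  simp only [taylorPrimitive, log_pow]
  norm_num
  ring
end

section
/- There exist constants c, C > 0 such that for all real y ≥ 0, c·(y−1)²·ln(2+y) ≤ y² ln(y²) − y² + 1 ≤ C·(y−1)²·ln(2+y), where the middle expression is interpreted as 1 at y = 0. -/
/-!
The middle expression is `klFun (y ^ 2)`, where `klFun t = t log t + 1 - t`.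
From `log t ≤ t - 1` one gets `klFun t ≤ (t - 1) ^ 2` and `klFun t ≤ (t - 1) log t`, and from
`y log y ≥ y - 1` one gets `klFun (y ^ 2) ≥ (y - 1) ^ 2`. For `y ≤ 3` the weight `log (2 + y)` lies
between `log 2` and `4`, so the two quadratic bounds suffice. For `y ≥ 3` both `klFun (y ^ 2)` and
`(y - 1) ^ 2 log (2 + y)` are comparable to `y ^ 2 log y`.
-/

open Real InformationTheory

lemma klFun_le_sq_sub_one {x : ℝ} (hx : 0 ≤ x) : klFun x ≤ (x - 1) ^ 2 := by
  rcases hx.eq_or_lt with rfl | hx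
  · simp [klFun_zero]
  · have := mul_le_mul_of_nonneg_left (log_le_sub_one_of_pos hx) hx.le
    rw [klFun_apply]
    nlinarith

lemma klFun_le_sub_one_mul_log {x : ℝ} (hx : 0 < x) : klFun x ≤ (x - 1) * log x := by
  have := log_le_sub_one_of_pos hx
  rw [klFun_apply]
  nlinarith

lemma klFun_sq_eq (y : ℝ) : klFun (y ^ 2) = 2 * y ^ 2 * log y - y ^ 2 + 1 := by
  rw [klFun_apply, log_pow]
  push_cast
  ring

lemma sq_sub_one_le_klFun_sq {y : ℝ} (hy : 0 ≤ y) : (y - 1) ^ 2 ≤ klFun (y ^ 2) := by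
  have := mul_le_mul_of_nonneg_left (self_sub_one_le_mul_log hy) hy
  rw [klFun_sq_eq]
  nlinarith

lemma klFun_sq_bounds_of_le_three {y : ℝ} (hy : 0 ≤ y) (hy3 : y ≤ 3) :
    1 / 4 * (y - 1) ^ 2 * log (2 + y) ≤ klFun (y ^ 2) ∧
      klFun (y ^ 2) ≤ 24 * (y - 1) ^ 2 * log (2 + y) := by
  have hlog_le : log (2 + y) ≤ 4 := by linarith [log_le_sub_one_of_pos (by linarith : 0 < 2 + y)]
  have hlog_ge : 2 / 3 ≤ log (2 + y) := by
    linarith [log_two_gt_d9, log_le_log two_pos (by linarith : (2 : ℝ) ≤ 2 + y)]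
  have hsq := sq_nonneg (y - 1)
  constructor
  · nlinarith [sq_sub_one_le_klFun_sq hy]
  · calc klFun (y ^ 2) ≤ (y - 1) ^ 2 * (y + 1) ^ 2 := by
          convert klFun_le_sq_sub_one (sq_nonneg y) using 1; ring
      _ ≤ (y - 1) ^ 2 * 16 := by gcongr; nlinarith
      _ ≤ 24 * (y - 1) ^ 2 * log (2 + y) := by nlinarith

lemma klFun_sq_bounds_of_three_le {y : ℝ} (hy3 : 3 ≤ y) :
    1 / 4 * (y - 1) ^ 2 * log (2 + y) ≤ klFun (y ^ 2) ∧
      klFun (y ^ 2) ≤ 24 * (y - 1) ^ 2 * log (2 + y) := by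
  have hlog_y : 2 / 3 ≤ log y := by
    linarith [log_two_gt_d9, log_le_log two_pos (by linarith : (2 : ℝ) ≤ y)]
  have hlog_le : log (2 + y) ≤ 2 * log y := by
    calc log (2 + y) ≤ log (y ^ 2) := log_le_log (by linarith) (by nlinarith)
      _ = 2 * log y := by rw [log_pow]; push_cast; ring
  have hlog_ge : log y ≤ log (2 + y) := log_le_log (by linarith) (by linarith)
  constructor
  · have h : (y - 1) ^ 2 * log (2 + y) ≤ y ^ 2 * (2 * log y) :=
      mul_le_mul (by nlinarith) hlog_le (by linarith) (sq_nonneg y)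
    rw [klFun_sq_eq]
    nlinarith
  · calc klFun (y ^ 2) ≤ 2 * (y - 1) * (y + 1) * log y := by
          convert klFun_le_sub_one_mul_log (by positivity : 0 < y ^ 2) using 1
          rw [log_pow]; push_cast; ring
      _ ≤ 2 * (y - 1) * (2 * (y - 1)) * log (2 + y) := by
          exact mul_le_mul (by nlinarith) hlog_ge (by linarith) (by nlinarith)
      _ ≤ 24 * (y - 1) ^ 2 * log (2 + y) := by nlinarith [sq_nonneg (y - 1)]

theorem energy_equiv :
    ∃ c > (0:ℝ), ∃ C > (0:ℝ), ∀ y : ℝ, 0 ≤ y →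
      c * (y - 1) ^ 2 * Real.log (2 + y) ≤ y ^ 2 * Real.log (y ^ 2) - y ^ 2 + 1 ∧
      y ^ 2 * Real.log (y ^ 2) - y ^ 2 + 1 ≤ C * (y - 1) ^ 2 * Real.log (2 + y) := by
  refine ⟨1 / 4, by norm_num, 24, by norm_num, fun y hy => ?_⟩
  rw [show y ^ 2 * log (y ^ 2) - y ^ 2 + 1 = klFun (y ^ 2) by rw [klFun_apply]; ring]
  rcases le_total y 3 with hy3 | hy3
  · exact klFun_sq_bounds_of_le_three hy hy3
  · exact klFun_sq_bounds_of_three_le hy3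
end

section
/- Let φ : ℝ → ℂ be a bounded C² function satisfying φ'' = λ φ ln|φ|² (with λ > 0, and convention φ ln|φ|² = 0 where φ = 0), such that φ' ∈ L² and |φ|² ln|φ|² − |φ|² + 1 ∈ L¹. Then |φ'(x)|² = λ(|φ(x)|² ln|φ(x)|² − |φ(x)|² + 1) for all x ∈ ℝ. -/
/-!
Along a solution, the energy `‖φ'‖² - λ (|φ|² log |φ|² - |φ|² + 1)` has zero derivative: at a
zero of `φ` the map `z ↦ ‖z‖² log ‖z‖²` is still differentiable, with derivative `0`, because it is
`o(‖z‖)`. A constant function integrable on `ℝ` vanishes.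
-/

open MeasureTheory Real Filter Topology Asymptotics
open scoped RealInnerProductSpace

section

variable {E : Type*} [NormedAddCommGroup E] [InnerProductSpace ℝ E]

theorem hasFDerivAt_norm_sq_mul_log (z : E) :
    HasFDerivAt (fun z : E => ‖z‖ ^ 2 * log (‖z‖ ^ 2))
      ((2 * (log (‖z‖ ^ 2) + 1)) • innerSL ℝ z) z := by
  rcases eq_or_ne z 0 with rfl | hz
  · simp only [map_zero, smul_zero]
    rw [hasFDerivAt_iff_isLittleO_nhds_zero, ← isLittleO_norm_right]
    have hlim : Tendsto (fun h : E => 2 * (‖h‖ * log ‖h‖)) (𝓝 0) (𝓝 0) :=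
      ((continuous_mul_log.comp continuous_norm).const_mul 2).tendsto' 0 0 (by simp)
    refine (((isLittleO_one_iff ℝ).mpr hlim).mul_isBigO (isBigO_refl (‖·‖) _)).congr' ?_ ?_
    · filter_upwards with h
      simp only [zero_add, log_pow, Nat.cast_ofNat, norm_zero, ne_eq, OfNat.ofNat_ne_zero,
        not_false_eq_true, zero_pow, log_zero, mul_zero, sub_zero, zero_apply]
      ring
    · filter_upwards with h; simp
  · refine ((hasDerivAt_mul_log (by positivity : ‖z‖ ^ 2 ≠ 0)).comp_hasFDerivAt z
      (hasStrictFDerivAt_norm_sq z).hasFDerivAt).congr_fderiv ?_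
    ext
    simp only [log_pow, Nat.cast_ofNat, smul_apply, coe_innerSL_apply,
      nsmul_eq_mul, smul_eq_mul]
    ring

theorem HasDerivAt.norm_sq_mul_log_sub_norm_sq {φ : ℝ → E} {φ' : E} {x : ℝ}
    (hφ : HasDerivAt φ φ' x) :
    HasDerivAt (fun y => ‖φ y‖ ^ 2 * Real.log (‖φ y‖ ^ 2) - ‖φ y‖ ^ 2 + 1)
      (2 * Real.log (‖φ x‖ ^ 2) * ⟪φ x, φ'⟫) x := by
  have hW := (hasFDerivAt_norm_sq_mul_log (φ x)).comp_hasDerivAt x hφ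
  refine ((hW.sub hφ.norm_sq).add_const 1).congr_deriv ?_
  simp only [smul_apply, innerSL_apply_apply, smul_eq_mul]
  ring

theorem hasDerivAt_energy_eq_zero {φ ψ : ℝ → E} {lam : ℝ}
    (hφ : ∀ x, HasDerivAt φ (ψ x) x)
    (hψ : ∀ x, HasDerivAt ψ ((lam * log (‖φ x‖ ^ 2)) • φ x) x) (x : ℝ) :
    HasDerivAt (fun y => ‖ψ y‖ ^ 2 -
      lam * (‖φ y‖ ^ 2 * log (‖φ y‖ ^ 2) - ‖φ y‖ ^ 2 + 1)) 0 x := by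
  refine ((hψ x).norm_sq.sub ((hφ x).norm_sq_mul_log_sub_norm_sq.const_mul lam)).congr_deriv ?_
  rw [inner_smul_right, real_inner_comm]
  ring

end

theorem eq_zero_of_integrable_of_hasDerivAt_zero {F : Type*} [NormedAddCommGroup F]
    [NormedSpace ℝ F] {g : ℝ → F} (hg : ∀ x, HasDerivAt g 0 x) (hint : Integrable g) (x : ℝ) :
    g x = 0 := by
  have hconst : g = fun _ => g 0 := funext fun y =>
    is_const_of_deriv_eq_zero (fun z => (hg z).differentiableAt) (fun z => (hg z).deriv) y 0
  rw [hconst] at hint ⊢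
  simpa [integrable_const_iff, isFiniteMeasure_iff] using hint

theorem energy_ode_general (lam : ℝ) (φ : ℝ → ℂ)
    (hreg : ContDiff ℝ 2 φ)
    (hode : ∀ x, deriv (deriv φ) x =
      (lam : ℂ) * φ x * (Real.log (‖φ x‖ ^ 2) : ℂ))
    (hderivL2 : MemLp (deriv φ) 2 (volume : Measure ℝ))
    (hpotL1 : Integrable (fun x =>
      ‖φ x‖ ^ 2 * Real.log (‖φ x‖ ^ 2) -
        ‖φ x‖ ^ 2 + 1) (volume : Measure ℝ)) :
    ∀ x : ℝ, ‖deriv φ x‖ ^ 2 =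
      lam * (‖φ x‖ ^ 2 * Real.log (‖φ x‖ ^ 2) -
        ‖φ x‖ ^ 2 + 1) := by
  have hφ : ∀ x, HasDerivAt φ (deriv φ x) x := fun x =>
    (hreg.differentiable (by norm_num) x).hasDerivAt
  have hψ : ∀ x, HasDerivAt (deriv φ) ((lam * log (‖φ x‖ ^ 2)) • φ x) x := fun x => by
    refine (hreg.differentiable_deriv_two x).hasDerivAt.congr_deriv ?_
    rw [hode x, Complex.real_smul]; push_cast; ring
  have hkin : Integrable (fun x => ‖deriv φ x‖ ^ 2) :=
    (memLp_two_iff_integrable_sq_norm hderivL2.1).mp hderivL2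
  intro x
  exact sub_eq_zero.mp <| eq_zero_of_integrable_of_hasDerivAt_zero
    (hasDerivAt_energy_eq_zero hφ hψ) (hkin.sub (hpotL1.const_mul lam)) x

theorem energy_ode (lam : ℝ) (hlam : 0 < lam) (φ : ℝ → ℂ)
    (hreg : ContDiff ℝ 2 φ)
    (hbdd : ∃ M, ∀ x, ‖φ x‖ ≤ M)
    (hode : ∀ x, deriv (deriv φ) x =
      (lam : ℂ) * φ x * (Real.log (‖φ x‖ ^ 2) : ℂ))
    (hderivL2 : MemLp (deriv φ) 2 (volume : Measure ℝ))
    (hpotL1 : Integrable (fun x =>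
      ‖φ x‖ ^ 2 * Real.log (‖φ x‖ ^ 2) -
        ‖φ x‖ ^ 2 + 1) (volume : Measure ℝ)) :
    ∀ x : ℝ, ‖deriv φ x‖ ^ 2 =
      lam * (‖φ x‖ ^ 2 * Real.log (‖φ x‖ ^ 2) -
        ‖φ x‖ ^ 2 + 1) :=
  energy_ode_general lam φ hreg hode hderivL2 hpotL1
end

section
/- Let λ > 0. There exists a unique global C¹ solution φ₀ : ℝ → ℝ of the ODE φ₀' = √λ · √(φ₀² ln(φ₀²) − φ₀² + 1) with φ₀(0) = 0 (where the radicand is interpreted as 1 at φ₀ = 0). This solution is strictly increasing, takes values in (−1, 1), and satisfies lim_{x→±∞} φ₀(x) = ±1. -/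
/-!
Separation of variables. Write `kinkSpeed y = √(y² log y² - y² + 1)`. It is positive on `(-1, 1)`
and at most `|y² - 1|`, so the time `kinkTime y = ∫₀^y dt / kinkSpeed t` is a strictly increasing
function on `(-1, 1)` that grows at least like `-log (1 - |y|) / 2`, hence a bijection onto `ℝ`;
the kink is `x ↦ kinkTime⁻¹ (√λ x)`. Conversely, the bound `kinkSpeed y ≤ |y - c| |y + c|` for
`c = ±1` makes the equilibria `±1` barriers by local uniqueness against the constant solution,
so a solution through `0` stays in `(-1, 1)`, where it satisfies `kinkTime (ψ x) = √λ x`.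
-/

open Filter Set Topology
open scoped NNReal

theorem mul_log_sub_add_one_le_sq {u : ℝ} (hu : 0 ≤ u) : u * Real.log u - u + 1 ≤ (u - 1) ^ 2 := by
  rcases hu.eq_or_lt with rfl | hu
  · simp
  · nlinarith [Real.log_le_sub_one_of_pos hu]

theorem eq_const_of_hasDerivAt_of_norm_le {E : Type*} [NormedAddCommGroup E] [NormedSpace ℝ E]
    {v : E → E} {f : ℝ → E} {c : E} {K : ℝ≥0} (hv : ∀ᶠ y in 𝓝 c, ‖v y‖ ≤ K * ‖y - c‖)
    (hf : ∀ t, HasDerivAt f (v (f t)) t) {t₀ : ℝ} (ht₀ : f t₀ = c) : f = fun _ ↦ c := by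
  have hvc : v c = 0 := norm_le_zero_iff.1 (by simpa using hv.self_of_nhds)
  have hcont : Continuous f := continuous_iff_continuousAt.2 fun t ↦ (hf t).continuousAt
  have hopen : IsOpen {t | f t = c} := by
    refine isOpen_iff_mem_nhds.2 fun t₁ (ht₁ : f t₁ = c) ↦ ?_
    have hnear : ∀ᶠ t in 𝓝 t₁, ‖v (f t)‖ ≤ K * ‖f t - c‖ :=
      hcont.continuousAt.eventually (by rwa [ht₁])
    -- Against the equilibrium, a Lipschitz bound on the two-point set `{f t, c}` suffices.
    refine ODE_solution_unique_of_eventually (v := fun _ ↦ v) (s := fun t ↦ {f t, c}) (K := K)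
      ?_ (.of_forall fun t ↦ ⟨hf t, mem_insert _ _⟩)
      (.of_forall fun _ ↦ ⟨by simpa [hvc] using hasDerivAt_const _ c, mem_insert_of_mem _ rfl⟩) ht₁
    filter_upwards [hnear] with t ht
    refine LipschitzOnWith.of_dist_le_mul ?_
    simp [forall_eq_or_imp, dist_eq_norm, hvc, ht, norm_sub_rev c]
  have huniv := IsClopen.eq_univ ⟨isClosed_eq hcont continuous_const, hopen⟩ ⟨t₀, ht₀⟩
  exact funext (eq_univ_iff_forall.1 huniv)

noncomputable def kinkSpeed (y : ℝ) : ℝ := √(y ^ 2 * Real.log (y ^ 2) - y ^ 2 + 1)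

theorem continuous_kinkSpeed : Continuous kinkSpeed := by
  unfold kinkSpeed
  fun_prop

theorem kinkSpeed_nonneg (y : ℝ) : 0 ≤ kinkSpeed y := Real.sqrt_nonneg _

theorem kinkSpeed_neg (y : ℝ) : kinkSpeed (-y) = kinkSpeed y := by
  simp [kinkSpeed]

theorem kinkSpeed_le (y : ℝ) : kinkSpeed y ≤ |y ^ 2 - 1| := by
  rw [← Real.sqrt_sq_eq_abs]
  exact Real.sqrt_le_sqrt (mul_log_sub_add_one_le_sq (sq_nonneg y))

theorem kinkSpeed_pos {y : ℝ} (hy : y ∈ Ioo (-1) 1) : 0 < kinkSpeed y := by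
  have hy2 : y ^ 2 < 1 := by nlinarith [hy.1, hy.2]
  have := Real.self_sub_one_lt_mul_log (sq_nonneg y) hy2.ne
  exact Real.sqrt_pos.2 (by linarith)

theorem eventually_norm_mul_kinkSpeed_le {c : ℝ} (hc : c ^ 2 = 1) (k : ℝ) :
    ∀ᶠ y in 𝓝 c, ‖k * kinkSpeed y‖ ≤ (3 * ‖k‖₊ : ℝ≥0) * ‖y - c‖ := by
  filter_upwards [Metric.ball_mem_nhds c one_pos] with y hy
  rw [Metric.mem_ball, Real.dist_eq] at hy
  have habs : |c| = 1 := by simpa using (sq_eq_sq_iff_abs_eq_abs c 1).1 (by rw [hc, one_pow])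
  have hsum : |y + c| ≤ 3 := by
    calc |y + c| = |(y - c) + 2 * c| := by ring_nf
      _ ≤ |y - c| + 2 * |c| := by simpa [abs_mul] using abs_add_le (y - c) (2 * c)
      _ ≤ 3 := by linarith
  calc ‖k * kinkSpeed y‖ = |k| * kinkSpeed y := by
        rw [norm_mul, Real.norm_eq_abs, Real.norm_of_nonneg (kinkSpeed_nonneg y)]
    _ ≤ |k| * (|y - c| * |y + c|) := by
        gcongr
        rw [← abs_mul, show (y - c) * (y + c) = y ^ 2 - 1 by linear_combination -hc]
        exact kinkSpeed_le y
    _ ≤ |k| * (|y - c| * 3) := by gcongr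
    _ = (3 * ‖k‖₊ : ℝ≥0) * ‖y - c‖ := by push_cast; simp only [Real.norm_eq_abs]; ring

noncomputable def kinkTime (y : ℝ) : ℝ := ∫ t in (0 : ℝ)..y, (kinkSpeed t)⁻¹

theorem intervalIntegrable_inv_kinkSpeed {a b : ℝ} (ha : a ∈ Ioo (-1) 1) (hb : b ∈ Ioo (-1) 1) :
    IntervalIntegrable (fun t ↦ (kinkSpeed t)⁻¹) MeasureTheory.volume a b :=
  ((continuous_kinkSpeed.continuousOn.inv₀ fun _ ht ↦ (kinkSpeed_pos ht).ne').mono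
    (ordConnected_Ioo.uIcc_subset ha hb)).intervalIntegrable

theorem hasDerivAt_kinkTime {y : ℝ} (hy : y ∈ Ioo (-1) 1) :
    HasDerivAt kinkTime (kinkSpeed y)⁻¹ y :=
  intervalIntegral.integral_hasDerivAt_right
    (intervalIntegrable_inv_kinkSpeed (by norm_num) hy)
    (continuous_kinkSpeed.measurable.inv.stronglyMeasurable.stronglyMeasurableAtFilter)
    (continuous_kinkSpeed.continuousAt.inv₀ (kinkSpeed_pos hy).ne')

theorem continuousOn_kinkTime : ContinuousOn kinkTime (Ioo (-1) 1) :=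
  fun _ hy ↦ (hasDerivAt_kinkTime hy).continuousAt.continuousWithinAt

theorem strictMonoOn_kinkTime : StrictMonoOn kinkTime (Ioo (-1) 1) :=
  strictMonoOn_of_deriv_pos (convex_Ioo _ _) continuousOn_kinkTime fun y hy ↦ by
    rw [interior_Ioo] at hy
    rw [(hasDerivAt_kinkTime hy).deriv]
    exact inv_pos.2 (kinkSpeed_pos hy)

@[simp]
theorem kinkTime_zero : kinkTime 0 = 0 := intervalIntegral.integral_same

theorem kinkTime_neg (y : ℝ) : kinkTime (-y) = -kinkTime y := by
  simp only [kinkTime]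
  rw [← intervalIntegral.integral_symm, ← neg_zero, ← intervalIntegral.integral_comp_neg]
  simp [kinkSpeed_neg]

theorem log_inv_one_sub_le_two_mul_kinkTime {y : ℝ} (hy₀ : 0 ≤ y) (hy₁ : y < 1) :
    Real.log (1 - y)⁻¹ ≤ 2 * kinkTime y := by
  have hlog : ∫ t in (0 : ℝ)..y, (1 - t)⁻¹ = Real.log (1 - y)⁻¹ := by
    rw [intervalIntegral.integral_comp_sub_left (fun t ↦ t⁻¹) 1,
      integral_inv_of_pos (by linarith) (by norm_num)]
    simp
  rw [← hlog, kinkTime, ← intervalIntegral.integral_const_mul]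
  refine intervalIntegral.integral_mono_on hy₀ ?_
    ((intervalIntegrable_inv_kinkSpeed (by norm_num) ⟨by linarith, hy₁⟩).const_mul 2)
    fun t ht ↦ ?_
  · refine ContinuousOn.intervalIntegrable (ContinuousOn.inv₀ (by fun_prop) fun t ht ↦ ?_)
    rw [uIcc_of_le hy₀] at ht
    linarith [ht.2]
  have ht' : t ∈ Ioo (-1) 1 := ⟨by linarith [ht.1], ht.2.trans_lt hy₁⟩
  have hpos := kinkSpeed_pos ht'
  have hle : kinkSpeed t ≤ 2 * (1 - t) := by
    have := kinkSpeed_le t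
    rw [abs_of_nonpos (by nlinarith [ht'.1, ht'.2])] at this
    nlinarith [ht'.1, ht'.2]
  calc (1 - t)⁻¹ = 2 * (2 * (1 - t))⁻¹ := by field_simp
    _ ≤ 2 * (kinkSpeed t)⁻¹ := by gcongr

theorem exists_le_kinkTime (z : ℝ) : ∃ y ∈ Ico (0 : ℝ) 1, z ≤ kinkTime y := by
  set y := 1 - Real.exp (-(2 * |z|)) with hy_def
  have hexp : Real.exp (-(2 * |z|)) ≤ 1 := Real.exp_le_one_iff.2 (by linarith [abs_nonneg z])
  have hy : y ∈ Ico (0 : ℝ) 1 := ⟨by linarith, by linarith [Real.exp_pos (-(2 * |z|))]⟩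
  refine ⟨y, hy, ?_⟩
  have := log_inv_one_sub_le_two_mul_kinkTime hy.1 hy.2
  rw [hy_def, sub_sub_cancel, ← Real.exp_neg, Real.log_exp, neg_neg] at this
  linarith [le_abs_self z]

theorem surjOn_kinkTime : SurjOn kinkTime (Ioo (-1) 1) univ := by
  intro z _
  obtain ⟨b, hb, hzb⟩ := exists_le_kinkTime z
  obtain ⟨a, ha, hza⟩ := exists_le_kinkTime (-z)
  have hsub : Icc (-a) b ⊆ Ioo (-1) 1 := Icc_subset_Ioo (by linarith [ha.2]) hb.2
  obtain ⟨y, hy, rfl⟩ := intermediate_value_Icc (by linarith [ha.1, hb.1])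
    (continuousOn_kinkTime.mono hsub) ⟨by linarith [kinkTime_neg a], hzb⟩
  exact ⟨y, hsub hy, rfl⟩

noncomputable def kinkProfile : ℝ → ℝ := Function.invFunOn kinkTime (Ioo (-1) 1)

theorem kinkProfile_mem (z : ℝ) : kinkProfile z ∈ Ioo (-1) 1 :=
  (Function.invFunOn_pos (surjOn_kinkTime (mem_univ z))).1

theorem kinkTime_kinkProfile (z : ℝ) : kinkTime (kinkProfile z) = z :=
  (Function.invFunOn_pos (surjOn_kinkTime (mem_univ z))).2

theorem kinkProfile_kinkTime {y : ℝ} (hy : y ∈ Ioo (-1) 1) : kinkProfile (kinkTime y) = y :=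
  strictMonoOn_kinkTime.injOn (kinkProfile_mem _) hy (kinkTime_kinkProfile _)

@[simp]
theorem kinkProfile_zero : kinkProfile 0 = 0 := by
  simpa using kinkProfile_kinkTime (y := 0) (by norm_num)

theorem strictMono_kinkProfile : StrictMono kinkProfile := fun z w h ↦ by
  rwa [← strictMonoOn_kinkTime.lt_iff_lt (kinkProfile_mem z) (kinkProfile_mem w),
    kinkTime_kinkProfile, kinkTime_kinkProfile]

theorem range_kinkProfile : range kinkProfile = Ioo (-1) 1 :=
  (range_subset_iff.2 kinkProfile_mem).antisymm fun y hy ↦ ⟨kinkTime y, kinkProfile_kinkTime hy⟩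

theorem continuous_kinkProfile : Continuous kinkProfile :=
  (strictMono_kinkProfile.isEmbedding_of_ordConnected
    (range_kinkProfile ▸ ordConnected_Ioo)).continuous

theorem hasDerivAt_kinkProfile (z : ℝ) : HasDerivAt kinkProfile (kinkSpeed (kinkProfile z)) z := by
  simpa using (hasDerivAt_kinkTime (kinkProfile_mem z)).of_local_left_inverse
    continuous_kinkProfile.continuousAt (inv_ne_zero (kinkSpeed_pos (kinkProfile_mem z)).ne')
    (.of_forall kinkTime_kinkProfile)

theorem tendsto_kinkProfile_atTop : Tendsto kinkProfile atTop (𝓝 1) :=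
  tendsto_atTop_isLUB strictMono_kinkProfile.monotone (range_kinkProfile ▸ isLUB_Ioo (by norm_num))

theorem tendsto_kinkProfile_atBot : Tendsto kinkProfile atBot (𝓝 (-1)) :=
  tendsto_atBot_isGLB strictMono_kinkProfile.monotone (range_kinkProfile ▸ isGLB_Ioo (by norm_num))

theorem hasDerivAt_kinkProfile_const_mul (k x : ℝ) :
    HasDerivAt (fun x ↦ kinkProfile (k * x)) (k * kinkSpeed (kinkProfile (k * x))) x := by
  simpa [Function.comp_def, mul_comm] using
    (hasDerivAt_kinkProfile (k * x)).comp x ((hasDerivAt_id x).const_mul k)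

theorem mem_Ioo_of_hasDerivAt_kinkSpeed {k : ℝ} {ψ : ℝ → ℝ}
    (hψ : ∀ x, HasDerivAt ψ (k * kinkSpeed (ψ x)) x) (hψ₀ : ψ 0 = 0) (x : ℝ) :
    ψ x ∈ Ioo (-1) 1 := by
  have hcont : Continuous ψ := continuous_iff_continuousAt.2 fun x ↦ (hψ x).continuousAt
  have hne : ∀ c : ℝ, c ^ 2 = 1 → c ∉ range ψ := by
    rintro c hc ⟨t, ht⟩
    have hconst := eq_const_of_hasDerivAt_of_norm_le (eventually_norm_mul_kinkSpeed_le hc k) hψ ht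
    have hc₀ : c = 0 := by simpa [hψ₀] using (congrFun hconst 0).symm
    simp [hc₀] at hc
  by_contra hx
  rw [mem_Ioo, not_and_or, not_lt, not_lt] at hx
  rcases hx with hx | hx
  · exact hne (-1) (by norm_num) (intermediate_value_univ x 0 hcont ⟨hx, by simp [hψ₀]⟩)
  · exact hne 1 (by norm_num) (intermediate_value_univ 0 x hcont ⟨by simp [hψ₀], hx⟩)

theorem eq_kinkProfile_of_hasDerivAt_kinkSpeed {k : ℝ} {ψ : ℝ → ℝ}
    (hψ : ∀ x, HasDerivAt ψ (k * kinkSpeed (ψ x)) x) (hψ₀ : ψ 0 = 0) :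
    ψ = fun x ↦ kinkProfile (k * x) := by
  have hmem := mem_Ioo_of_hasDerivAt_kinkSpeed hψ hψ₀
  have hderiv (x : ℝ) : HasDerivAt (fun x ↦ kinkTime (ψ x) - k * x) 0 x := by
    have h := ((hasDerivAt_kinkTime (hmem x)).comp x (hψ x)).sub ((hasDerivAt_id' x).const_mul k)
    rwa [mul_left_comm, inv_mul_cancel₀ (kinkSpeed_pos (hmem x)).ne', mul_one, sub_self] at h
  funext x
  have := is_const_of_deriv_eq_zero (fun x ↦ (hderiv x).differentiableAt)
    (fun x ↦ (hderiv x).deriv) x 0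
  rw [← kinkProfile_kinkTime (hmem x)]
  congr 1
  simpa [hψ₀, sub_eq_zero] using this

theorem exists_unique_kink (lam : ℝ) (hlam : 0 < lam) :
    ∃ φ : ℝ → ℝ,
      (ContDiff ℝ 1 φ ∧ φ 0 = 0 ∧
        (∀ x, deriv φ x = Real.sqrt lam *
          Real.sqrt ((φ x) ^ 2 * Real.log ((φ x) ^ 2) - (φ x) ^ 2 + 1))) ∧
      StrictMono φ ∧
      (∀ x, φ x ∈ Set.Ioo (-1 : ℝ) 1) ∧
      Tendsto φ atTop (nhds 1) ∧ Tendsto φ atBot (nhds (-1)) ∧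
      (∀ ψ : ℝ → ℝ, ContDiff ℝ 1 ψ → ψ 0 = 0 →
        (∀ x, deriv ψ x = Real.sqrt lam *
          Real.sqrt ((ψ x) ^ 2 * Real.log ((ψ x) ^ 2) - (ψ x) ^ 2 + 1)) →
        ψ = φ) := by
  have hk : 0 < √lam := Real.sqrt_pos.2 hlam
  have hφ := hasDerivAt_kinkProfile_const_mul √lam
  refine ⟨fun x ↦ kinkProfile (√lam * x), ⟨?_, by simp, fun x ↦ (hφ x).deriv⟩,
    strictMono_kinkProfile.comp (strictMono_mul_left_of_pos hk), fun x ↦ kinkProfile_mem _,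
    tendsto_kinkProfile_atTop.comp (tendsto_id.const_mul_atTop hk),
    tendsto_kinkProfile_atBot.comp (tendsto_id.const_mul_atBot hk), ?_⟩
  · refine contDiff_one_iff_deriv.2 ⟨fun x ↦ (hφ x).differentiableAt, ?_⟩
    rw [funext fun x ↦ (hφ x).deriv]
    exact continuous_const.mul (continuous_kinkSpeed.comp
      (continuous_kinkProfile.comp (continuous_const_mul _)))
  · intro ψ hψ hψ₀ hψ'
    exact eq_kinkProfile_of_hasDerivAt_kinkSpeed
      (fun x ↦ ((hψ.differentiable one_ne_zero x).hasDerivAt).congr_deriv (hψ' x)) hψ₀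
end

section
/- Let λ > 0 and φ₀ the solution of φ₀' = √λ √(φ₀² ln φ₀² − φ₀² + 1), φ₀(0) = 0. Then φ₀ converges to its limits ±1 exponentially fast: there exist constants c₁, C > 0 such that −1 < φ₀(x) ≤ −1 + e^{√λ c₁ x} for all x ≤ 0 and 1 − e^{−√λ c₁ x} ≤ φ₀(x) < 1 for all x ≥ 0. In particular φ₀' ∈ L²(ℝ) and |φ₀| − 1 ∈ L²(ℝ). -/
/-!
For `F(y) = y² log y² − y² + 1` one has `(1 − |y|)² ≤ F(y) ≤ 4 (1 − |y|)²` when `|y| ≤ 1`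
(from `1 − 1/t ≤ log t ≤ t − 1`), so for `x ≥ 0` the equation `φ' = c √F(φ)` gives
`c (1 − φ) ≤ φ' ≤ 2c (1 − φ)` as long as `0 ≤ φ ≤ 1`. The upper estimate keeps `φ` below `1`
by a barrier argument; Grönwall's inequality for `1 − φ` then gives `1 − φ ≤ e^{−cx}`. The reflection `x ↦ −φ(−x)` solves the same equation, which handles `x ≤ 0`.
Finally `φ'` and `1 − |φ|` are dominated by multiples of `e^{−c|x|}`, which is square integrable.
-/

open MeasureTheory Set Real

noncomputable def kinkRadicand (y : ℝ) : ℝ := y ^ 2 * log (y ^ 2) - y ^ 2 + 1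

lemma kinkRadicand_neg (y : ℝ) : kinkRadicand (-y) = kinkRadicand y := by
  simp only [kinkRadicand, neg_sq]

lemma kinkRadicand_eq_abs (y : ℝ) :
    kinkRadicand y = 2 * |y| ^ 2 * log |y| - |y| ^ 2 + 1 := by
  rw [kinkRadicand, ← sq_abs, log_pow]
  push_cast
  ring

lemma one_sub_abs_sq_le_kinkRadicand (y : ℝ) : (1 - |y|) ^ 2 ≤ kinkRadicand y := by
  rw [kinkRadicand_eq_abs]
  rcases (abs_nonneg y).eq_or_lt with h | h
  · simp [← h]
  · have hlog : 1 - |y|⁻¹ ≤ log |y| := one_sub_inv_le_log_of_pos h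
    have : 2 * |y| ^ 2 * (1 - |y|⁻¹) = 2 * |y| ^ 2 - 2 * |y| := by field_simp
    nlinarith [mul_le_mul_of_nonneg_left hlog (by positivity : (0 : ℝ) ≤ 2 * |y| ^ 2)]

lemma kinkRadicand_le {y : ℝ} (hy : |y| ≤ 1) : kinkRadicand y ≤ (2 * (1 - |y|)) ^ 2 := by
  rw [kinkRadicand_eq_abs]
  rcases (abs_nonneg y).eq_or_lt with h | h
  · simp [← h]
  · have hlog : log |y| ≤ |y| - 1 := log_le_sub_one_of_pos h
    nlinarith [mul_le_mul_of_nonneg_left hlog (by positivity : (0 : ℝ) ≤ 2 * |y| ^ 2)]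

lemma one_sub_abs_le_sqrt_kinkRadicand (y : ℝ) : 1 - |y| ≤ √(kinkRadicand y) :=
  le_sqrt_of_sq_le (one_sub_abs_sq_le_kinkRadicand y)

lemma sqrt_kinkRadicand_le {y : ℝ} (hy : |y| ≤ 1) : √(kinkRadicand y) ≤ 2 * (1 - |y|) :=
  sqrt_le_iff.2 ⟨by linarith, kinkRadicand_le hy⟩

lemma integrable_exp_neg_mul_abs {K : ℝ} (hK : 0 < K) :
    Integrable (fun x : ℝ => exp (-(K * |x|))) := by
  rw [← integrableOn_univ, ← Iic_union_Ioi (a := 0), integrableOn_union]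
  constructor
  · refine (integrableOn_exp_mul_Iic hK 0).congr_fun (fun x hx => ?_) measurableSet_Iic
    rw [abs_of_nonpos hx, mul_neg, neg_neg]
  · refine (integrableOn_exp_mul_Ioi (neg_neg_of_pos hK) 0).congr_fun (fun x hx => ?_)
      measurableSet_Ioi
    simp only [abs_of_pos (mem_Ioi.1 hx), neg_mul]

lemma memLp_two_exp_neg_mul_abs {K : ℝ} (hK : 0 < K) :
    MemLp (fun x : ℝ => exp (-(K * |x|))) 2 volume := by
  rw [memLp_two_iff_integrable_sq (by fun_prop)]
  refine (integrable_exp_neg_mul_abs (mul_pos two_pos hK)).congr (ae_of_all _ fun x => ?_)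
  simp only [← exp_nat_mul]
  push_cast
  ring_nf

/-- The paper's `φ₀` is the case `c = √λ`. -/
structure IsKink (c : ℝ) (φ : ℝ → ℝ) : Prop where
  differentiable : Differentiable ℝ φ
  map_zero : φ 0 = 0
  deriv_eq : ∀ x, deriv φ x = c * √(kinkRadicand (φ x))

namespace IsKink

variable {c : ℝ} {φ : ℝ → ℝ}

lemma reflect (h : IsKink c φ) : IsKink c (fun x => -φ (-x)) := by
  refine ⟨(h.differentiable.comp differentiable_neg).neg, by simp [h.map_zero], fun x => ?_⟩
  rw [deriv.fun_neg, deriv_comp_neg, neg_neg, h.deriv_eq, kinkRadicand_neg]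

lemma monotone (h : IsKink c φ) (hc : 0 ≤ c) : Monotone φ :=
  monotone_of_deriv_nonneg h.differentiable fun x => h.deriv_eq x ▸ by positivity

lemma nonneg (h : IsKink c φ) (hc : 0 ≤ c) {x : ℝ} (hx : 0 ≤ x) : 0 ≤ φ x :=
  h.map_zero ▸ h.monotone hc hx

lemma deriv_le (h : IsKink c φ) (hc : 0 ≤ c) {x : ℝ} (hx : |φ x| ≤ 1) :
    deriv φ x ≤ c * (2 * (1 - |φ x|)) :=
  h.deriv_eq x ▸ mul_le_mul_of_nonneg_left (sqrt_kinkRadicand_le hx) hc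

lemma le_deriv (h : IsKink c φ) (hc : 0 ≤ c) (x : ℝ) : c * (1 - |φ x|) ≤ deriv φ x :=
  h.deriv_eq x ▸ mul_le_mul_of_nonneg_left (one_sub_abs_le_sqrt_kinkRadicand _) hc

/-- The barrier `1 - exp (-3 c x) / 2` cannot be crossed, since at a contact point
`φ' ≤ 2 c (1 - φ) = c exp (-3 c x)` is smaller than the slope of the barrier. -/
lemma lt_one (h : IsKink c φ) (hc : 0 < c) {x : ℝ} (hx : 0 ≤ x) : φ x < 1 := by
  have hB : ∀ t, HasDerivAt (fun t => 1 - exp (-(3 * c) * t) / 2)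
      (3 * c / 2 * exp (-(3 * c) * t)) t := fun t =>
    ((((hasDerivAt_id t).const_mul (-(3 * c))).exp.div_const 2).const_sub 1).congr_deriv
      (by simp only [id, mul_one]; ring)
  have hle : φ x ≤ 1 - exp (-(3 * c) * x) / 2 := by
    refine image_le_of_deriv_right_lt_deriv_boundary' h.differentiable.continuous.continuousOn
      (fun t _ => (h.differentiable t).hasDerivAt.hasDerivWithinAt) (by norm_num [h.map_zero])
      (fun t _ => (hB t).continuousAt.continuousWithinAt) (fun t _ => (hB t).hasDerivWithinAt)
      (fun t ht hφt => ?_) ⟨hx, le_rfl⟩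
    have hexp := exp_pos (-(3 * c) * t)
    have habs : |φ t| = φ t := abs_of_nonneg (h.nonneg hc.le ht.1)
    have hderiv := h.deriv_le hc.le (x := t) (by rw [habs, hφt]; linarith)
    rw [habs, hφt] at hderiv
    nlinarith
  linarith [exp_pos (-(3 * c) * x)]

lemma one_sub_exp_le (h : IsKink c φ) (hc : 0 ≤ c) {x : ℝ} (hx : 0 ≤ x) :
    1 - exp (-(c * x)) ≤ φ x := by
  have := le_gronwallBound_of_liminf_deriv_right_le (f := fun t => 1 - φ t) (δ := 1) (K := -c)
    (ε := 0) (b := x) (h.differentiable.const_sub 1).continuous.continuousOn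
    (fun t _ r hr => ((h.differentiable t).hasDerivAt.const_sub 1).hasDerivWithinAt
      |>.liminf_right_slope_le hr) (by simp [h.map_zero]) (fun t ht => ?_) x ⟨hx, le_rfl⟩
  · rw [gronwallBound_ε0, sub_zero, one_mul, neg_mul] at this
    linarith
  · have := h.le_deriv hc t
    rw [abs_of_nonneg (h.nonneg hc ht.1)] at this
    linarith

lemma neg_one_lt (h : IsKink c φ) (hc : 0 < c) {x : ℝ} (hx : x ≤ 0) : -1 < φ x := by
  have := h.reflect.lt_one hc (x := -x) (by linarith)
  simp only [neg_neg] at this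
  linarith

lemma le_neg_one_add_exp (h : IsKink c φ) (hc : 0 ≤ c) {x : ℝ} (hx : x ≤ 0) :
    φ x ≤ -1 + exp (c * x) := by
  have := h.reflect.one_sub_exp_le hc (x := -x) (by linarith)
  simp only [neg_neg, mul_neg] at this
  linarith

lemma abs_lt_one (h : IsKink c φ) (hc : 0 < c) (x : ℝ) : |φ x| < 1 := by
  rcases le_total 0 x with hx | hx
  · exact abs_lt.2 ⟨by linarith [h.nonneg hc.le hx], h.lt_one hc hx⟩
  · exact abs_lt.2 ⟨h.neg_one_lt hc hx, by linarith [h.monotone hc.le hx, h.map_zero]⟩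

lemma one_sub_abs_le_exp (h : IsKink c φ) (hc : 0 < c) (x : ℝ) :
    1 - |φ x| ≤ exp (-(c * |x|)) := by
  rcases le_total 0 x with hx | hx
  · rw [abs_of_nonneg hx, abs_of_nonneg (h.nonneg hc.le hx)]
    linarith [h.one_sub_exp_le hc.le hx]
  · rw [abs_of_nonpos hx, abs_of_nonpos (h.map_zero ▸ h.monotone hc.le hx), mul_neg, neg_neg]
    linarith [h.le_neg_one_add_exp hc.le hx]

lemma memLp_abs_sub_one (h : IsKink c φ) (hc : 0 < c) :
    MemLp (fun x => |φ x| - 1) 2 volume := by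
  refine (memLp_two_exp_neg_mul_abs hc).of_le
    (h.differentiable.continuous.abs.sub continuous_const).aestronglyMeasurable
    (ae_of_all _ fun x => ?_)
  rw [norm_of_nonpos (by linarith [h.abs_lt_one hc x]), norm_of_nonneg (exp_pos _).le]
  linarith [h.one_sub_abs_le_exp hc x]

lemma memLp_deriv (h : IsKink c φ) (hc : 0 < c) : MemLp (deriv φ) 2 volume := by
  refine ((memLp_two_exp_neg_mul_abs hc).const_mul (2 * c)).of_le
    (measurable_deriv φ).aestronglyMeasurable (ae_of_all _ fun x => ?_)
  have hderiv := h.deriv_le hc.le (h.abs_lt_one hc x).le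
  rw [norm_of_nonneg (h.deriv_eq x ▸ by positivity), norm_of_nonneg (by positivity)]
  nlinarith [h.one_sub_abs_le_exp hc x]

end IsKink

theorem kink_exponential_convergence (lam : ℝ) (hlam : 0 < lam) (φ : ℝ → ℝ)
    (hreg : ContDiff ℝ 1 φ) (h0 : φ 0 = 0)
    (hode : ∀ x, deriv φ x = Real.sqrt lam *
      Real.sqrt ((φ x) ^ 2 * Real.log ((φ x) ^ 2) - (φ x) ^ 2 + 1)) :
    ∃ c₁ > (0:ℝ),
      (∀ x ≤ (0:ℝ), -1 < φ x ∧ φ x ≤ -1 + Real.exp (Real.sqrt lam * c₁ * x)) ∧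
      (∀ x ≥ (0:ℝ), 1 - Real.exp (-(Real.sqrt lam * c₁ * x)) ≤ φ x ∧ φ x < 1) ∧
      MemLp (deriv φ) 2 (volume : Measure ℝ) ∧
      MemLp (fun x => |φ x| - 1) 2 (volume : Measure ℝ) := by
  have hφ : IsKink (√lam) φ := ⟨hreg.differentiable one_ne_zero, h0, hode⟩
  have hc : 0 < √lam := sqrt_pos.2 hlam
  refine ⟨1, one_pos, fun x hx => ?_, fun x hx => ?_, hφ.memLp_deriv hc, hφ.memLp_abs_sub_one hc⟩
  · rw [mul_one]
    exact ⟨hφ.neg_one_lt hc hx, hφ.le_neg_one_add_exp hc.le hx⟩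
  · rw [mul_one]
    exact ⟨hφ.one_sub_exp_le hc.le hx, hφ.lt_one hc hx⟩
end

section
/- Let λ > 0 and c ∈ ℝ with 0 < c² < 2λ. Define f_c(y) = (c²/4)(1/y³ − y) + λ y ln(y²) for y > 0. Then f_c has exactly two zeros on (0, ∞), namely some y₁ ∈ (0,1) and y = 1; f_c is positive on (0, y₁) ∪ (1, ∞) and negative on (y₁, 1). -/
noncomputable def Gfc (a lam y : ℝ) : ℝ := a * (y ^ 4)⁻¹ - a + 2 * lam * Real.log y

lemma Gfc_hasDeriv (a lam y : ℝ) (hy : 0 < y) :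
    HasDerivAt (Gfc a lam) ((2 * lam * y ^ 4 - 4 * a) / y ^ 5) y := by
  have h1 : HasDerivAt (fun y : ℝ => y ^ 4) (4 * y ^ 3) y := by
    simpa using hasDerivAt_pow 4 y
  have h2 := h1.inv (by positivity)
  have h3 := h2.const_mul a
  have h4 := (Real.hasDerivAt_log hy.ne').const_mul (2 * lam)
  have h5 := (h3.sub_const a).add h4
  refine h5.congr_deriv ?_
  have hy4 : (y : ℝ) ^ 4 ≠ 0 := by positivity
  field_simp
  ring

lemma Gfc_anti (a lam ystar : ℝ) (ha : 0 < a) (hlam : 0 < lam) (hys : 0 < ystar)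
    (hy4 : lam * ystar ^ 4 = 2 * a) :
    StrictAntiOn (Gfc a lam) (Set.Ioc 0 ystar) := by
  apply strictAntiOn_of_deriv_neg (convex_Ioc 0 ystar)
  · intro y hy
    exact ((Gfc_hasDeriv a lam y hy.1).continuousAt).continuousWithinAt
  · intro y hy
    rw [interior_Ioc] at hy
    have hy0 : 0 < y := hy.1
    rw [(Gfc_hasDeriv a lam y hy0).deriv]
    apply div_neg_of_neg_of_pos
    · have : lam * y ^ 4 < lam * ystar ^ 4 := by
        have := pow_lt_pow_left₀ hy.2 hy.1.le (by norm_num : (4:ℕ) ≠ 0)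
        nlinarith
      nlinarith
    · positivity

lemma Gfc_mono (a lam ystar : ℝ) (ha : 0 < a) (hlam : 0 < lam) (hys : 0 < ystar)
    (hy4 : lam * ystar ^ 4 = 2 * a) :
    StrictMonoOn (Gfc a lam) (Set.Ici ystar) := by
  apply strictMonoOn_of_deriv_pos (convex_Ici ystar)
  · intro y hy
    exact ((Gfc_hasDeriv a lam y (hys.trans_le hy)).continuousAt).continuousWithinAt
  · intro y hy
    rw [interior_Ici] at hy
    have hy0 : 0 < y := hys.trans hy
    rw [(Gfc_hasDeriv a lam y hy0).deriv]
    apply div_pos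
    · have : lam * ystar ^ 4 < lam * y ^ 4 := by
        have := pow_lt_pow_left₀ hy hys.le (by norm_num : (4:ℕ) ≠ 0)
        nlinarith
      nlinarith
    · positivity

theorem f_c_sign (lam c : ℝ) (hlam : 0 < lam) (hc : 0 < c ^ 2) (hc2 : c ^ 2 < 2 * lam) :
    ∃ y₁ ∈ Set.Ioo (0:ℝ) 1,
      (∀ y > (0:ℝ),
        (c ^ 2 / 4 * (1 / y ^ 3 - y) + lam * y * Real.log (y ^ 2) = 0 ↔
          y = y₁ ∨ y = 1)) ∧
      (∀ y ∈ Set.Ioo (0:ℝ) y₁,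
        0 < c ^ 2 / 4 * (1 / y ^ 3 - y) + lam * y * Real.log (y ^ 2)) ∧
      (∀ y > (1:ℝ),
        0 < c ^ 2 / 4 * (1 / y ^ 3 - y) + lam * y * Real.log (y ^ 2)) ∧
      (∀ y ∈ Set.Ioo y₁ (1:ℝ),
        c ^ 2 / 4 * (1 / y ^ 3 - y) + lam * y * Real.log (y ^ 2) < 0) := by
  set a : ℝ := c ^ 2 / 4 with ha_def
  have ha : 0 < a := by positivity
  -- f y = y * Gfc a lam y for y > 0
  have hfG : ∀ y : ℝ, 0 < y →
      c ^ 2 / 4 * (1 / y ^ 3 - y) + lam * y * Real.log (y ^ 2) = y * Gfc a lam y := by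
    intro y hy
    have hlog : Real.log (y ^ 2) = 2 * Real.log y := by
      rw [Real.log_pow]; push_cast; ring
    rw [hlog, Gfc, ha_def]
    field_simp
  -- y*
  set t : ℝ := c ^ 2 / (2 * lam) with ht_def
  have ht0 : 0 < t := by positivity
  have ht1 : t < 1 := by rw [ht_def, div_lt_one (by positivity)]; linarith
  set ystar : ℝ := t ^ ((1:ℝ)/4) with hys_def
  have hys0 : 0 < ystar := Real.rpow_pos_of_pos ht0 _
  have hys1 : ystar < 1 := Real.rpow_lt_one ht0.le ht1 (by norm_num)
  have hys4 : ystar ^ 4 = t := by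
    rw [hys_def, ← Real.rpow_natCast (t ^ ((1:ℝ)/4)) 4, ← Real.rpow_mul ht0.le]
    norm_num
  have hy4 : lam * ystar ^ 4 = 2 * a := by
    rw [hys4, ht_def, ha_def]; field_simp; ring
  have hanti := Gfc_anti a lam ystar ha hlam hys0 hy4
  have hmono := Gfc_mono a lam ystar ha hlam hys0 hy4
  have hG1 : Gfc a lam 1 = 0 := by simp [Gfc]
  -- Gfc a lam ystar < 0
  have hGys : Gfc a lam ystar < 0 := by
    have := hmono (Set.self_mem_Ici) (le_of_lt hys1 : ystar ≤ 1) hys1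
    rwa [hG1] at this
  -- choose y₀ with Gfc a lam y₀ > 0
  set r : ℝ := (a / (2 * lam + a)) ^ ((1:ℝ)/3) with hr_def
  have hr0 : 0 < r := Real.rpow_pos_of_pos (by positivity) _
  have hr3 : r ^ 3 = a / (2 * lam + a) := by
    rw [hr_def, ← Real.rpow_natCast ((a / (2*lam+a)) ^ ((1:ℝ)/3)) 3,
      ← Real.rpow_mul (by positivity)]
    norm_num
  set y₀ : ℝ := min ystar r with hy₀_def
  have hy₀0 : 0 < y₀ := lt_min hys0 hr0
  have hy₀ys : y₀ ≤ ystar := min_le_left _ _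
  have hy₀1 : y₀ ≤ 1 := hy₀ys.trans hys1.le
  have hGy₀ : 0 < Gfc a lam y₀ := by
    have hlog : 1 - 1 / y₀ ≤ Real.log y₀ := by
      have h := Real.log_le_sub_one_of_pos (show (0:ℝ) < 1 / y₀ by positivity)
      rw [Real.log_div one_ne_zero hy₀0.ne', Real.log_one] at h
      linarith
    have hcube : y₀ ^ 3 ≤ r ^ 3 :=
      pow_le_pow_left₀ hy₀0.le (min_le_right _ _) 3
    have h1 : (2 * lam + a) * y₀ ^ 3 ≤ a := by
      rw [hr3, le_div_iff₀ (by positivity)] at hcube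
      nlinarith [hcube]
    have hy43 : y₀ ^ 4 ≤ y₀ ^ 3 := pow_le_pow_of_le_one hy₀0.le hy₀1 (by norm_num)
    have e : 2 * lam / y₀ * y₀ ^ 4 = 2 * lam * y₀ ^ 3 := by field_simp
    have h2 : (2 * lam / y₀ + a) * y₀ ^ 4 ≤ a := by nlinarith
    have h3 : 2 * lam / y₀ + a ≤ a * (y₀ ^ 4)⁻¹ := by
      rw [← div_eq_mul_inv, le_div_iff₀ (by positivity)]
      exact h2
    have h4 : 2 * lam * (1 - 1 / y₀) ≤ 2 * lam * Real.log y₀ :=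
      mul_le_mul_of_nonneg_left hlog (by positivity)
    have hGval : Gfc a lam y₀ = a * (y₀ ^ 4)⁻¹ - a + 2 * lam * Real.log y₀ := rfl
    have e2 : 2 * lam * (1 - 1 / y₀) = 2 * lam - 2 * lam / y₀ := by ring
    nlinarith
  -- IVT: Gfc a lam y₀ > 0 > Gfc a lam ystar, find y₁
  have hcont : ContinuousOn (Gfc a lam) (Set.Icc y₀ ystar) := by
    intro y hy
    exact ((Gfc_hasDeriv a lam y (hy₀0.trans_le hy.1)).continuousAt).continuousWithinAt
  have hsub := intermediate_value_Icc' hy₀ys hcont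
  have h0mem : (0:ℝ) ∈ Set.Icc (Gfc a lam ystar) (Gfc a lam y₀) := ⟨hGys.le, hGy₀.le⟩
  obtain ⟨y₁, hy₁mem, hy₁G⟩ := hsub h0mem
  have hy₁0 : 0 < y₁ := hy₀0.trans_le hy₁mem.1
  have hy₁s : y₁ ≤ ystar := hy₁mem.2
  have hy₁1 : y₁ < 1 := hy₁s.trans_lt hys1
  -- sign facts for G
  have pos_left : ∀ y ∈ Set.Ioo (0:ℝ) y₁, 0 < Gfc a lam y := by
    intro y hy
    have := hanti ⟨hy.1, (hy.2.le.trans hy₁s)⟩ ⟨hy₁0, hy₁s⟩ hy.2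
    rw [hy₁G] at this
    exact this
  have neg_mid : ∀ y ∈ Set.Ioo y₁ (1:ℝ), Gfc a lam y < 0 := by
    intro y hy
    rcases le_or_gt y ystar with h | h
    · have := hanti ⟨hy₁0, hy₁s⟩ ⟨hy₁0.trans hy.1, h⟩ hy.1
      rw [hy₁G] at this
      exact this
    · have := hmono (le_of_lt h : ystar ≤ y) (le_of_lt (h.trans hy.2) : ystar ≤ 1) hy.2
      rwa [hG1] at this
  have pos_right : ∀ y > (1:ℝ), 0 < Gfc a lam y := by
    intro y hy
    have := hmono (hys1.le : ystar ≤ 1) (hys1.le.trans hy.le) hy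
    rwa [hG1] at this
  refine ⟨y₁, ⟨hy₁0, hy₁1⟩, ?_, ?_, ?_, ?_⟩
  · intro y hy
    rw [hfG y hy]
    constructor
    · intro h
      have hGy : Gfc a lam y = 0 := by
        rcases mul_eq_zero.mp h with h' | h'
        · exact absurd h' hy.ne'
        · exact h'
      rcases lt_trichotomy y y₁ with h1 | h1 | h1
      · exact absurd hGy (pos_left y ⟨hy, h1⟩).ne'
      · exact Or.inl h1
      · rcases lt_trichotomy y 1 with h2 | h2 | h2
        · exact absurd hGy (neg_mid y ⟨h1, h2⟩).ne
        · exact Or.inr h2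
        · exact absurd hGy (pos_right y h2).ne'
    · rintro (rfl | rfl)
      · rw [hy₁G, mul_zero]
      · rw [hG1, mul_zero]
  · intro y hy
    rw [hfG y hy.1]
    exact mul_pos hy.1 (pos_left y hy)
  · intro y hy
    rw [hfG y (by linarith : (0:ℝ) < y)]
    exact mul_pos (by linarith) (pos_right y hy)
  · intro y hy
    have hy0 : 0 < y := hy₁0.trans hy.1
    rw [hfG y hy0]
    exact mul_neg_of_pos_of_neg hy0 (neg_mid y hy)
end

section
/- Let λ > 0 and c ∈ ℝ with 0 < c² < 2λ. Define g_c(y) = −(c²/4)(1−y²)²/y² + λ(y² ln(y²) − y² + 1) for y > 0. Then g_c has exactly two zeros on (0, ∞): some y₀ ∈ (0, 1) and y = 1; moreover g_c is negative on (0, y₀) and positive on (y₀, ∞) \ {1}. -/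
/-!
Substitute `t = y²`. The derivative of `t ↦ g_c(√t)` is
`F(t) = (c²/4)(1/t² − 1) + λ log t`, and `F'(t) = (λt² − c²/2)/t³` changes sign once, at
`a = √(c²/(2λ)) < 1`. Since `F(1) = 0` and `F → +∞` at `0⁺`, `F` is positive, negative, positive
on `(0, s)`, `(s, 1)`, `(1, ∞)` for some `s < a`. Hence `g_c(√t)` increases, decreases, increases
on these intervals; as it vanishes at `1` and tends to `−∞` at `0⁺`, it has exactly one more zero,
in `(0, s)`, and the signs follow.
-/

open Real Set Filter Topology

def CrossesAtTouchesOne (φ : ℝ → ℝ) (x₀ : ℝ) : Prop :=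
  x₀ ∈ Ioo (0 : ℝ) 1 ∧ (∀ x > (0 : ℝ), φ x = 0 ↔ x = x₀ ∨ x = 1) ∧
    (∀ x ∈ Ioo (0 : ℝ) x₀, φ x < 0) ∧ ∀ x > x₀, x ≠ 1 → 0 < φ x

namespace CrossesAtTouchesOne

variable {φ : ℝ → ℝ} {x₀ : ℝ}

theorem of_sign (hx₀ : x₀ ∈ Ioo 0 1) (h₀ : φ x₀ = 0) (h₁ : φ 1 = 0)
    (hneg : ∀ x ∈ Ioo 0 x₀, φ x < 0) (hpos : ∀ x > x₀, x ≠ 1 → 0 < φ x) :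
    CrossesAtTouchesOne φ x₀ := by
  refine ⟨hx₀, fun x hx ↦ ⟨fun hφ ↦ ?_, ?_⟩, hneg, hpos⟩
  · by_contra! hne
    rcases hne.1.lt_or_gt with hlt | hgt
    · exact (hneg x ⟨hx, hlt⟩).ne hφ
    · exact (hpos x hgt hne.2).ne' hφ
  · rintro (rfl | rfl) <;> assumption

theorem comp_sq (h : CrossesAtTouchesOne φ x₀) :
    CrossesAtTouchesOne (fun y ↦ φ (y ^ 2)) √x₀ := by
  obtain ⟨⟨hx₀, hx₀1⟩, hzero, hneg, hpos⟩ := h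
  refine of_sign ⟨sqrt_pos.2 hx₀, (sqrt_lt' one_pos).2 (by simpa using hx₀1)⟩ ?_ ?_ ?_ ?_
  · simpa [sq_sqrt hx₀.le] using (hzero x₀ hx₀).2 (Or.inl rfl)
  · simpa using (hzero 1 one_pos).2 (Or.inr rfl)
  · exact fun y hy ↦ hneg _ ⟨pow_pos hy.1 2, (lt_sqrt hy.1.le).1 hy.2⟩
  · intro y hy hy1
    have hy0 : 0 < y := (sqrt_nonneg x₀).trans_lt hy
    exact hpos _ ((sqrt_lt' hy0).1 hy)
      fun h ↦ hy1 ((pow_eq_one_iff_of_nonneg hy0.le two_ne_zero).1 h)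

end CrossesAtTouchesOne

section SignFromDerivative

variable {f f' : ℝ → ℝ}

theorem strictMonoOn_of_hasDerivAt_pos {D : Set ℝ} (hD : Convex ℝ D)
    (hf : ∀ x ∈ D, HasDerivAt f (f' x) x) (hf' : ∀ x ∈ interior D, 0 < f' x) :
    StrictMonoOn f D :=
  strictMonoOn_of_hasDerivWithinAt_pos hD (fun x hx ↦ (hf x hx).continuousAt.continuousWithinAt)
    (fun x hx ↦ (hf x (interior_subset hx)).hasDerivWithinAt) hf'

theorem strictAntiOn_of_hasDerivAt_neg {D : Set ℝ} (hD : Convex ℝ D)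
    (hf : ∀ x ∈ D, HasDerivAt f (f' x) x) (hf' : ∀ x ∈ interior D, f' x < 0) :
    StrictAntiOn f D :=
  strictAntiOn_of_hasDerivWithinAt_neg hD (fun x hx ↦ (hf x hx).continuousAt.continuousWithinAt)
    (fun x hx ↦ (hf x (interior_subset hx)).hasDerivWithinAt) hf'

theorem exists_zero_of_strictMonoOn_Ioc {b : ℝ} (hb : 0 < b) (hcont : ContinuousOn f (Ioc 0 b))
    (hmono : StrictMonoOn f (Ioc 0 b)) (hlim : Tendsto f (𝓝[>] 0) atBot) (hfb : 0 < f b) :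
    ∃ t₀ ∈ Ioo 0 b, f t₀ = 0 ∧ (∀ t ∈ Ioo 0 t₀, f t < 0) ∧ ∀ t ∈ Ioc t₀ b, 0 < f t := by
  obtain ⟨δ, hfδ, hδ⟩ :=
    ((hlim.eventually (eventually_lt_atBot 0)).and (Ioo_mem_nhdsGT hb)).exists
  obtain ⟨t₀, ⟨hδt₀, ht₀b⟩, hzero⟩ := intermediate_value_Ioo hδ.2.le
    (hcont.mono fun t ht ↦ ⟨hδ.1.trans_le ht.1, ht.2⟩) ⟨hfδ, hfb⟩
  have ht₀ : 0 < t₀ := hδ.1.trans hδt₀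
  refine ⟨t₀, ⟨ht₀, ht₀b⟩, hzero, fun t ht ↦ ?_, fun t ht ↦ ?_⟩
  · exact hzero ▸ hmono ⟨ht.1, (ht.2.trans ht₀b).le⟩ ⟨ht₀, ht₀b.le⟩ ht.2
  · exact hzero ▸ hmono ⟨ht₀, ht₀b.le⟩ ⟨ht₀.trans ht.1, ht.2⟩ ht.1

variable (hf : ∀ t ∈ Ioi 0, HasDerivAt f (f' t) t)
include hf

theorem exists_pos_neg_pos_of_deriv_neg_pos {a : ℝ} (ha : a ∈ Ioo 0 1)
    (hneg : ∀ t ∈ Ioo 0 a, f' t < 0) (hpos : ∀ t ∈ Ioi a, 0 < f' t) (h₁ : f 1 = 0)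
    (hlim : Tendsto f (𝓝[>] 0) atTop) :
    ∃ s ∈ Ioo 0 a,
      (∀ t ∈ Ioo 0 s, 0 < f t) ∧ (∀ t ∈ Ioo s 1, f t < 0) ∧ ∀ t ∈ Ioi 1, 0 < f t := by
  have hanti : StrictAntiOn f (Ioc 0 a) :=
    strictAntiOn_of_hasDerivAt_neg (convex_Ioc 0 a) (fun t ht ↦ hf t ht.1) (by simpa using hneg)
  have hmono : StrictMonoOn f (Ici a) :=
    strictMonoOn_of_hasDerivAt_pos (convex_Ici a) (fun t ht ↦ hf t (ha.1.trans_le ht))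
      (by simpa using hpos)
  have hneg_Ico : ∀ t ∈ Ico a 1, f t < 0 := fun t ht ↦ h₁ ▸ hmono ht.1 ha.2.le ht.2
  have hcont : ContinuousOn (-f) (Ioc 0 a) :=
    fun t ht ↦ (hf t ht.1).continuousAt.continuousWithinAt.neg
  obtain ⟨s, hs, -, hpos_s, hneg_s⟩ := exists_zero_of_strictMonoOn_Ioc ha.1 hcont hanti.neg
    (tendsto_neg_atTop_atBot.comp hlim) (by simpa using hneg_Ico a ⟨le_rfl, ha.2⟩)
  refine ⟨s, hs, fun t ht ↦ by simpa using hpos_s t ht, fun t ht ↦ ?_,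
    fun t ht ↦ h₁ ▸ hmono ha.2.le (ha.2.trans ht).le ht⟩
  rcases le_or_gt t a with hta | hta
  · simpa using hneg_s t ⟨ht.1, hta⟩
  · exact hneg_Ico t ⟨hta.le, ht.2⟩

theorem exists_crossesAtTouchesOne_of_deriv_pos_neg_pos {s : ℝ} (hs : s ∈ Ioo 0 1)
    (hpos : ∀ t ∈ Ioo 0 s, 0 < f' t) (hneg : ∀ t ∈ Ioo s 1, f' t < 0)
    (hpos' : ∀ t ∈ Ioi 1, 0 < f' t) (h₁ : f 1 = 0) (hlim : Tendsto f (𝓝[>] 0) atBot) :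
    ∃ t₀, CrossesAtTouchesOne f t₀ := by
  have hmono : StrictMonoOn f (Ioc 0 s) :=
    strictMonoOn_of_hasDerivAt_pos (convex_Ioc 0 s) (fun t ht ↦ hf t ht.1) (by simpa using hpos)
  have hanti : StrictAntiOn f (Icc s 1) :=
    strictAntiOn_of_hasDerivAt_neg (convex_Icc s 1) (fun t ht ↦ hf t (hs.1.trans_le ht.1))
      (by simpa using hneg)
  have hmono' : StrictMonoOn f (Ici 1) :=
    strictMonoOn_of_hasDerivAt_pos (convex_Ici 1)
      (fun t ht ↦ hf t (zero_lt_one.trans_le (mem_Ici.1 ht))) (by simpa using hpos')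
  have hpos_Ico : ∀ t ∈ Ico s 1, 0 < f t :=
    fun t ht ↦ h₁ ▸ hanti ⟨ht.1, ht.2.le⟩ ⟨hs.2.le, le_rfl⟩ ht.2
  have hcont : ContinuousOn f (Ioc 0 s) := fun t ht ↦ (hf t ht.1).continuousAt.continuousWithinAt
  obtain ⟨t₀, ht₀, h₀, hneg₀, hpos₀⟩ := exists_zero_of_strictMonoOn_Ioc hs.1 hcont hmono hlim
    (hpos_Ico s ⟨le_rfl, hs.2⟩)
  refine ⟨t₀, .of_sign ⟨ht₀.1, ht₀.2.trans hs.2⟩ h₀ h₁ hneg₀ fun t ht ht1 ↦ ?_⟩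
  rcases le_or_gt t s with hts | hst
  · exact hpos₀ t ⟨ht, hts⟩
  rcases ht1.lt_or_gt with ht1 | ht1
  · exact hpos_Ico t ⟨hst.le, ht1⟩
  · exact h₁ ▸ hmono' self_mem_Ici ht1.le ht1

end SignFromDerivative

section GcSquare

variable (lam c : ℝ)

/-- `g_c(y) = gSq lam c (y ^ 2)`. -/
noncomputable def gSq (t : ℝ) : ℝ :=
  -(c ^ 2 / 4) * (1 - t) ^ 2 / t + lam * (t * log t - t + 1)

noncomputable def gSqDeriv (t : ℝ) : ℝ :=
  c ^ 2 / 4 * (1 / t ^ 2 - 1) + lam * log t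

variable {lam c}

theorem hasDerivAt_gSq {t : ℝ} (ht : t ≠ 0) : HasDerivAt (gSq lam c) (gSqDeriv lam c t) t := by
  have h₁ : HasDerivAt (fun t ↦ (1 - t) ^ 2) (-(2 * (1 - t))) t := by
    simpa using ((hasDerivAt_const t (1 : ℝ)).fun_sub (hasDerivAt_id' t)).fun_pow 2
  have h₂ : HasDerivAt (fun t ↦ t * log t - t + 1) (log t) t := by
    simpa [ht] using (((hasDerivAt_id' t).fun_mul (hasDerivAt_log ht)).fun_sub
      (hasDerivAt_id' t)).add_const 1
  refine (((h₁.const_mul (-(c ^ 2 / 4))).fun_div (hasDerivAt_id' t) ht).fun_add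
    (h₂.const_mul lam)).congr_deriv ?_
  simp only [gSqDeriv]
  field_simp
  ring

theorem hasDerivAt_gSqDeriv {t : ℝ} (ht : t ≠ 0) :
    HasDerivAt (gSqDeriv lam c) ((lam * t ^ 2 - c ^ 2 / 2) / t ^ 3) t := by
  have h₁ : HasDerivAt (fun t ↦ 1 / t ^ 2 - 1) (-(2 * t) / (t ^ 2) ^ 2) t := by
    simpa using ((hasDerivAt_pow 2 t).fun_inv (pow_ne_zero 2 ht)).sub_const 1
  refine ((h₁.const_mul (c ^ 2 / 4)).fun_add ((hasDerivAt_log ht).const_mul lam)).congr_deriv ?_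
  field_simp
  ring

theorem gSq_one : gSq lam c 1 = 0 := by simp [gSq]

theorem gSqDeriv_one : gSqDeriv lam c 1 = 0 := by simp [gSqDeriv]

theorem tendsto_gSq_nhdsGT_zero (hc : 0 < c ^ 2) : Tendsto (gSq lam c) (𝓝[>] 0) atBot := by
  have hpole : Tendsto (fun t ↦ -(c ^ 2 / 4) * (1 - t) ^ 2) (𝓝[>] 0) (𝓝 (-(c ^ 2 / 4))) :=
    tendsto_nhdsWithin_of_tendsto_nhds ((by fun_prop : Continuous fun t : ℝ ↦
      -(c ^ 2 / 4) * (1 - t) ^ 2).tendsto' 0 _ (by simp))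
  have hrest : Tendsto (fun t ↦ lam * (t * log t - t + 1)) (𝓝[>] 0) (𝓝 lam) :=
    tendsto_nhdsWithin_of_tendsto_nhds ((by have := continuous_mul_log; fun_prop :
      Continuous fun t ↦ lam * (t * log t - t + 1)).tendsto' 0 _ (by simp))
  convert (tendsto_inv_nhdsGT_zero.atTop_mul_neg (by linarith) hpole).atBot_add hrest using 1
  ext t
  simp only [gSq, div_eq_mul_inv]
  ring

theorem tendsto_gSqDeriv_nhdsGT_zero (hc : 0 < c ^ 2) :
    Tendsto (gSqDeriv lam c) (𝓝[>] 0) atTop := by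
  have hcoef : Tendsto (fun t ↦ c ^ 2 / 4 + lam * (t * (t * log t))) (𝓝[>] 0) (𝓝 (c ^ 2 / 4)) :=
    tendsto_nhdsWithin_of_tendsto_nhds ((by have := continuous_mul_log; fun_prop :
      Continuous fun t ↦ c ^ 2 / 4 + lam * (t * (t * log t))).tendsto' 0 _ (by simp))
  have hinv : Tendsto (fun t : ℝ ↦ t⁻¹ ^ 2) (𝓝[>] 0) atTop :=
    (tendsto_pow_atTop two_ne_zero).comp tendsto_inv_nhdsGT_zero
  refine ((hinv.atTop_mul_pos (by positivity) hcoef).atTop_add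
    (tendsto_const_nhds (x := -(c ^ 2 / 4)))).congr' ?_
  filter_upwards [self_mem_nhdsWithin] with t (ht : 0 < t)
  simp only [gSqDeriv]
  field_simp
  ring

end GcSquare

theorem g_c_sign (lam c : ℝ) (hlam : 0 < lam) (hc : 0 < c ^ 2) (hc2 : c ^ 2 < 2 * lam) :
    ∃ y₀ ∈ Set.Ioo (0:ℝ) 1,
      (∀ y > (0:ℝ),
        (-(c ^ 2 / 4) * (1 - y ^ 2) ^ 2 / y ^ 2 +
            lam * (y ^ 2 * Real.log (y ^ 2) - y ^ 2 + 1) = 0 ↔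
          y = y₀ ∨ y = 1)) ∧
      (∀ y ∈ Set.Ioo (0:ℝ) y₀,
        -(c ^ 2 / 4) * (1 - y ^ 2) ^ 2 / y ^ 2 +
          lam * (y ^ 2 * Real.log (y ^ 2) - y ^ 2 + 1) < 0) ∧
      (∀ y > y₀, y ≠ 1 →
        0 < -(c ^ 2 / 4) * (1 - y ^ 2) ^ 2 / y ^ 2 +
          lam * (y ^ 2 * Real.log (y ^ 2) - y ^ 2 + 1)) := by
  set a := √(c ^ 2 / (2 * lam))
  have ha : a ∈ Ioo 0 1 :=
    ⟨sqrt_pos.2 (by positivity),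
      (sqrt_lt' one_pos).2 (by rw [div_lt_iff₀ (by positivity)]; linarith)⟩
  have hneg {t : ℝ} (ht : t ∈ Ioo 0 a) : lam * t ^ 2 - c ^ 2 / 2 < 0 := by
    have := (lt_sqrt ht.1.le).1 ht.2
    rw [lt_div_iff₀ (by positivity)] at this
    linarith
  have hpos {t : ℝ} (ht : a < t) : 0 < lam * t ^ 2 - c ^ 2 / 2 := by
    have := (sqrt_lt' (ha.1.trans ht)).1 ht
    rw [div_lt_iff₀ (by positivity)] at this
    linarith
  obtain ⟨s, hs, hF₁, hF₂, hF₃⟩ := exists_pos_neg_pos_of_deriv_neg_pos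
    (fun t ht ↦ hasDerivAt_gSqDeriv (ne_of_gt ht)) ha
    (fun t ht ↦ div_neg_of_neg_of_pos (hneg ht) (pow_pos ht.1 3))
    (fun t ht ↦ div_pos (hpos ht) (pow_pos (ha.1.trans ht) 3))
    gSqDeriv_one (tendsto_gSqDeriv_nhdsGT_zero hc)
  obtain ⟨t₀, ht₀⟩ := exists_crossesAtTouchesOne_of_deriv_pos_neg_pos
    (fun t ht ↦ hasDerivAt_gSq (ne_of_gt ht)) ⟨hs.1, hs.2.trans ha.2⟩ hF₁ hF₂ hF₃ gSq_one
    (tendsto_gSq_nhdsGT_zero hc)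
  exact ⟨√t₀, ht₀.comp_sq⟩
end

section
/- Let ρ : ℝ → (0, ∞) be C², bounded above and bounded away from 0, with ρ(x) → 1 as x → ±∞. Let c ∈ ℝ and suppose θ : ℝ → ℝ is C² and satisfies ρθ'' + 2ρ'θ' = cρ' on ℝ. If ρ' + iρθ' ∈ L²(ℝ; ℂ), then θ'(x) = (c/2)(1 − 1/ρ(x)²) for all x ∈ ℝ. -/
open MeasureTheory Filter Topology

/-!
Along any solution, `ρ² (θ' - c/2)` has derivative `ρ (ρ θ'' + 2 ρ' θ' - c ρ') = 0`, so
`θ' = c/2 + C/ρ²` for a constant `C`. Then `ρ θ' = (c/2) ρ + C/ρ → c/2 + C` at `+∞`; since `ρ θ'`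
is the imaginary part of an `L²` function, this limit must vanish, i.e. `C = -c/2`.
-/

theorem MemLp.eq_zero_of_tendsto_atTop {E : Type*} [NormedAddCommGroup E] {p : ENNReal}
    {f : ℝ → E} (hf : MemLp f p volume) (hp_ne_zero : p ≠ 0) (hp_ne_top : p ≠ ⊤) {L : E}
    (hlim : Tendsto f atTop (𝓝 L)) : L = 0 := by
  by_contra hL
  set ε : NNReal := ‖L‖₊ / 2
  have hε : ε ≠ 0 := by simpa [ε] using hL
  obtain ⟨A, hA⟩ :=
    (hlim.nnnorm.eventually_const_le (half_lt_self (nnnorm_pos.2 hL))).exists_forall_of_atTop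
  have : volume (Set.Ici A) < ⊤ :=
    (measure_mono fun x hx => hA x hx).trans_lt (hf.meas_ge_lt_top hp_ne_zero hp_ne_top hε)
  simp at this

theorem exists_forall_sq_mul_sub_eq_of_ode {ρ u : ℝ → ℝ} {c : ℝ} (hρ : Differentiable ℝ ρ)
    (hu : Differentiable ℝ u) (hode : ∀ x, ρ x * deriv u x + 2 * deriv ρ x * u x = c * deriv ρ x) :
    ∃ C, ∀ x, ρ x ^ 2 * (u x - c / 2) = C := by
  have hderiv (x : ℝ) : HasDerivAt (fun y => ρ y ^ 2 * (u y - c / 2)) 0 x := by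
    have := ((hρ x).hasDerivAt.fun_pow 2).fun_mul ((hu x).hasDerivAt.sub_const (c / 2))
    refine this.congr_deriv ?_
    linear_combination ρ x * hode x
  exact ⟨_, fun x => is_const_of_deriv_eq_zero (fun y => (hderiv y).differentiableAt)
    (fun y => (hderiv y).deriv) x 0⟩

theorem tendsto_mul_of_sq_mul_sub_eq {l : Filter ℝ} {ρ u : ℝ → ℝ} {c C : ℝ}
    (hρ : ∀ x, ρ x ≠ 0) (hC : ∀ x, ρ x ^ 2 * (u x - c / 2) = C) (hlim : Tendsto ρ l (𝓝 1)) :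
    Tendsto (fun x => ρ x * u x) l (𝓝 (c / 2 + C)) := by
  have hsplit (x : ℝ) : ρ x * u x = c / 2 * ρ x + C * (ρ x)⁻¹ := by
    rw [← hC x]; field_simp [hρ x]; ring
  simp_rw [hsplit]
  simpa using (hlim.const_mul (c / 2)).add ((hlim.inv₀ one_ne_zero).const_mul C)

theorem phase_derivative_formula_general (c : ℝ) (ρ θ : ℝ → ℝ)
    (hρreg : ContDiff ℝ 2 ρ) (hθreg : ContDiff ℝ 2 θ)
    (hρpos : ∃ m > (0:ℝ), ∀ x, m ≤ ρ x)
    (hlim_top : Tendsto ρ atTop (nhds 1))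
    (hode : ∀ x, ρ x * deriv (deriv θ) x + 2 * deriv ρ x * deriv θ x = c * deriv ρ x)
    (hL2 : MemLp (fun x => ((deriv ρ x : ℝ) : ℂ) + Complex.I * ((ρ x * deriv θ x : ℝ) : ℂ)) 2
      (volume : Measure ℝ)) :
    ∀ x, deriv θ x = c / 2 * (1 - 1 / (ρ x) ^ 2) := by
  obtain ⟨m, hm, hmρ⟩ := hρpos
  have hρ_ne (x : ℝ) : ρ x ≠ 0 := (hm.trans_le (hmρ x)).ne'
  have hθ'_diff : Differentiable ℝ (deriv θ) :=
    (contDiff_succ_iff_deriv.1 hθreg).2.2.differentiable one_ne_zero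
  obtain ⟨C, hC⟩ := exists_forall_sq_mul_sub_eq_of_ode
    (hρreg.differentiable two_ne_zero) hθ'_diff hode
  have hC_eq : c / 2 + C = 0 := by
    refine MemLp.eq_zero_of_tendsto_atTop (f := fun x => ρ x * deriv θ x) ?_ two_ne_zero
      ENNReal.ofNat_ne_top (tendsto_mul_of_sq_mul_sub_eq hρ_ne hC hlim_top)
    simpa using hL2.im
  intro x
  have hθ'_x : deriv θ x = c / 2 + C / ρ x ^ 2 := by
    rw [← hC x]; field_simp [hρ_ne x]; ring
  rw [hθ'_x, show C = -(c / 2) by linarith]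
  ring

theorem phase_derivative_formula (c : ℝ) (ρ θ : ℝ → ℝ)
    (hρreg : ContDiff ℝ 2 ρ) (hθreg : ContDiff ℝ 2 θ)
    (hρpos : ∃ m > (0:ℝ), ∀ x, m ≤ ρ x)
    (hρbdd : ∃ M : ℝ, ∀ x, ρ x ≤ M)
    (hlim_top : Tendsto ρ atTop (nhds 1)) (hlim_bot : Tendsto ρ atBot (nhds 1))
    (hode : ∀ x, ρ x * deriv (deriv θ) x + 2 * deriv ρ x * deriv θ x = c * deriv ρ x)
    (hL2 : MemLp (fun x => ((deriv ρ x : ℝ) : ℂ) + Complex.I * ((ρ x * deriv θ x : ℝ) : ℂ)) 2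
      (volume : Measure ℝ)) :
    ∀ x, deriv θ x = c / 2 * (1 - 1 / (ρ x) ^ 2) :=
  phase_derivative_formula_general c ρ θ hρreg hθreg hρpos hlim_top hode hL2
end
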